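/- arXiv:2509.23178 — 4 statements merged into one kernel-verified Lean document; each statement's English description precedes it below -/
import Mathlib

section
/- For every L ≥ 1 and every s with 2^(L−1) ≤ s, there exist an s-step reasoning chain a, a permutation σ of {1,…,s}, and a reasoning start x(2s+1) = (a m₀).1, such that (a m₀).1 ∈ V^L_(2s+1) and (a (m₀+t)).2 ∈ V^L_(2s+1) for every 0 ≤ t ≤ 2^(L−1)−2; that is, after L layers the final position resolves at least 2^(L−1)−1 consecutive reasoning steps starting from the reasoning start. -/
/-- An `s`-step reasoning chain, with pairs indexed by `1, …, s`:
entries of a pair differ, consecutive pairs link up, and there are no loops. -/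
def IsChainOn (s : ℤ) (a : ℤ → ℤ × ℤ) : Prop :=
  (∀ i, 1 ≤ i → i ≤ s → (a i).1 ≠ (a i).2) ∧
  (∀ i, 1 ≤ i → i ≤ s - 1 → (a i).2 = (a (i + 1)).1) ∧
  (∀ i j, 1 ≤ i → i ≤ j → j ≤ s → (a i).1 ≠ (a j).2)

/-- `x` is the `s`-step reasoning sequence built from the chain `a` and a
permutation `σ` of `{1, …, s}`. -/
def IsSeqOn (s : ℤ) (a : ℤ → ℤ × ℤ) (σ : ℤ → ℤ) (x : ℤ → ℤ) : Prop :=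
  Set.BijOn σ (Set.Icc 1 s) (Set.Icc 1 s) ∧
  ∀ m : ℤ, 1 ≤ m → m ≤ s → x (2 * m - 1) = (a (σ m)).1 ∧ x (2 * m) = (a (σ m)).2

/-- Value sets of maximal masked information propagation on the (finite, positions
`≥ 1`) sequence `x`: layer 0 is the token itself, layer 1 performs adjacent position
matching into even positions, and higher layers perform same-token matching from
all earlier positions `j` with `1 ≤ j < i`. -/
def valueSetM (x : ℤ → ℤ) : ℕ → ℤ → Set ℤ
  | 0, i => {x i}
  | 1, i => if Even i then {x (i - 1), x i} else {x i}
  | l + 2, i =>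
      valueSetM x (l + 1) i ∪
        ⋃ (j : ℤ)
          (_ : 1 ≤ j ∧ j < i ∧ (valueSetM x (l + 1) j ∩ valueSetM x (l + 1) i).Nonempty),
          valueSetM x (l + 1) j

lemma valueSetM_mono (x : ℤ → ℤ) (l : ℕ) (i : ℤ) :
    valueSetM x (l+1) i ⊆ valueSetM x (l+2) i := by
  intro k hk
  simp only [valueSetM]
  exact Or.inl hk

lemma lemA (x : ℤ → ℤ) (s : ℤ)
    (hx : ∀ m : ℤ, 1 ≤ m → m ≤ s → x (2*m-1) = m ∧ x (2*m) = m+1) :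
    ∀ l : ℕ, ∀ m k : ℤ, 1 ≤ m → m ≤ s → 1 ≤ k → k ≤ m + 1 → m - k ≤ 2^l - 1 →
      k ∈ valueSetM x (l+1) (2*m) := by
  intro l
  induction l with
  | zero =>
    intro m k hm hms hk1 hk2 hk3
    have he : Even (2*m) := ⟨m, by ring⟩
    obtain ⟨h1, h2⟩ := hx m hm hms
    simp only [valueSetM, if_pos he, Set.mem_insert_iff, Set.mem_singleton_iff]
    norm_num at hk3
    rcases (by omega : k = m ∨ k = m + 1) with h | h
    · left; omega
    · right; omega
  | succ l ih =>
    intro m k hm hms hk1 hk2 hk3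
    have hp : (1:ℤ) ≤ 2^l := one_le_pow₀ (by norm_num)
    have h2 : (2:ℤ)^(l+1) = 2 * 2^l := by ring
    by_cases hc : m - k ≤ 2^l - 1
    · exact valueSetM_mono x l (2*m) (ih m k hm hms hk1 hk2 hc)
    · set P := (2:ℤ)^l with hP
      rw [h2] at hk3
      push_neg at hc
      have hkm : k ≤ m - P := by omega
      set m' := m - P with hm'
      have hm'1 : 1 ≤ m' := by omega
      have hm's : m' ≤ s := by omega
      have hA : m' + 1 ∈ valueSetM x (l+1) (2*m') :=
        ih m' (m'+1) hm'1 hm's (by omega) le_rfl (by omega)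
      have hB : m' + 1 ∈ valueSetM x (l+1) (2*m) :=
        ih m (m'+1) hm hms (by omega) (by omega) (by omega)
      have hk : k ∈ valueSetM x (l+1) (2*m') :=
        ih m' k hm'1 hm's hk1 (by omega) (by omega)
      simp only [valueSetM]
      right
      exact Set.mem_iUnion₂.mpr ⟨2*m', ⟨by omega, by omega, ⟨m'+1, hA, hB⟩⟩, hk⟩

lemma lemB (x : ℤ → ℤ) (s : ℤ)
    (hx : ∀ m : ℤ, 1 ≤ m → m ≤ s → x (2*m-1) = m ∧ x (2*m) = m+1)
    (hx2 : x (2*s+1) = 1) :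
    ∀ l : ℕ, ∀ k : ℤ, 1 ≤ k → k ≤ 2^l → (2:ℤ)^l ≤ s + 1 →
      k ∈ valueSetM x (l+1) (2*s+1) := by
  intro l
  induction l with
  | zero =>
    intro k hk1 hk2 _
    have hne : ¬ Even (2*s+1) := by simp [Int.even_iff]
    simp only [valueSetM, if_neg hne, Set.mem_singleton_iff]
    norm_num at hk2
    omega
  | succ l ih =>
    intro k hk1 hk2 hls
    have hp : (1:ℤ) ≤ 2^l := one_le_pow₀ (by norm_num)
    have h2 : (2:ℤ)^(l+1) = 2 * 2^l := by ring
    rw [h2] at hk2 hls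
    by_cases hc : k ≤ 2^l
    · exact valueSetM_mono x l (2*s+1) (ih k hk1 hc (by omega))
    · set P := (2:ℤ)^l with hP
      push_neg at hc
      set m := k - 1 with hm
      have hm1 : 1 ≤ m := by omega
      have hms : m ≤ s := by omega
      have hA : k - P ∈ valueSetM x (l+1) (2*m) :=
        lemA x s hx l m (k - P) hm1 hms (by omega) (by omega) (by omega)
      have hB : k - P ∈ valueSetM x (l+1) (2*s+1) :=
        ih (k - P) (by omega) (by omega) (by omega)
      have hk : k ∈ valueSetM x (l+1) (2*m) :=
        lemA x s hx l m k hm1 hms hk1 (by omega) (by omega)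
      simp only [valueSetM]
      right
      exact Set.mem_iUnion₂.mpr ⟨2*m, ⟨by omega, by omega, ⟨k - P, hA, hB⟩⟩, hk⟩

/-- for every `L ≥ 1` and every `s ≥ 2^(L-1)` there is an `s`-step
reasoning chain, an arrangement, and a reasoning start for which the final
position resolves at least `2^(L-1) - 1` consecutive reasoning steps after `L`
layers. -/
theorem exists_chain_resolving_lower_bound
    (L : ℕ) (hL : 1 ≤ L) (s : ℤ) (hs : (2 : ℤ) ^ (L - 1) ≤ s) :
    ∃ (a : ℤ → ℤ × ℤ) (σ : ℤ → ℤ) (x : ℤ → ℤ) (m₀ : ℤ),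
      IsChainOn s a ∧ IsSeqOn s a σ x ∧
      1 ≤ m₀ ∧ m₀ ≤ s ∧ m₀ + ((2 : ℤ) ^ (L - 1) - 2) ≤ s ∧
      x (2 * s + 1) = (a m₀).1 ∧
      (a m₀).1 ∈ valueSetM x L (2 * s + 1) ∧
      ∀ t : ℤ, 0 ≤ t → t ≤ (2 : ℤ) ^ (L - 1) - 2 →
        (a (m₀ + t)).2 ∈ valueSetM x L (2 * s + 1) := by
  obtain ⟨l, rfl⟩ : ∃ l, L = l + 1 := ⟨L - 1, by omega⟩
  have hl : (l + 1) - 1 = l := by omega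
  rw [hl] at hs ⊢
  have hp : (1:ℤ) ≤ 2^l := one_le_pow₀ (by norm_num)
  have hs1 : (1:ℤ) ≤ s := le_trans hp hs
  set x : ℤ → ℤ := fun i => if i = 2*s+1 then 1 else (i+2)/2 with hxdef
  have hx : ∀ m : ℤ, 1 ≤ m → m ≤ s → x (2*m-1) = m ∧ x (2*m) = m+1 := by
    intro m hm hms
    constructor <;> · simp only [hxdef]; rw [if_neg (by omega)]; omega
  have hx2 : x (2*s+1) = 1 := by simp [hxdef]
  refine ⟨fun i => (i, i+1), fun n => n, x, 1,
    ⟨fun i _ _ => by simp, fun i _ _ => by simp,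
     fun i j hi hij hjs => by simp; omega⟩,
    ⟨Set.bijOn_id _, fun m hm hms => hx m hm hms⟩,
    le_refl 1, hs1, by omega, hx2, ?_, ?_⟩
  · exact lemB x s hx hx2 l 1 le_rfl hp (by omega)
  · intro t ht1 ht2
    have h := lemB x s hx hx2 l (t + 2) (by omega) (by omega) (by omega)
    show (1 + t) + 1 ∈ _
    have he : (1 + t) + 1 = t + 2 := by ring
    rw [he]
    exact h
end

section
/- For every s-step reasoning chain a, every permutation σ of {1,…,s}, every layer l with 1 ≤ l and 2^(l−1) ≤ s, and every pair index p with 1 ≤ p ≤ s − 2^(l−1) + 1, there exists a position k with 1 ≤ k ≤ 2s such that for every 0 ≤ α ≤ 2^(l−1)−1 both entries (a (p+α)).1 and (a (p+α)).2 belong to V^l_k; that is, some layer-l node contains the values of 2^(l−1) consecutive reasoning pairs starting at pair p. -/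
lemma valueSetM_succ_succ (x : ℤ → ℤ) (n : ℕ) (i : ℤ) :
    valueSetM x (n + 2) i =
      valueSetM x (n + 1) i ∪
        ⋃ (j : ℤ)
          (_ : 1 ≤ j ∧ j < i ∧ (valueSetM x (n + 1) j ∩ valueSetM x (n + 1) i).Nonempty),
          valueSetM x (n + 1) j := rfl

lemma key (s : ℤ) (a : ℤ → ℤ × ℤ) (σ : ℤ → ℤ) (x : ℤ → ℤ)
    (ha : IsChainOn s a) (hx : IsSeqOn s a σ x) (n : ℕ) :
    (2:ℤ)^n ≤ s → ∀ p : ℤ, 1 ≤ p → p ≤ s - 2^n + 1 →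
    ∃ k : ℤ, 1 ≤ k ∧ k ≤ 2*s ∧ ∀ α : ℤ, 0 ≤ α → α ≤ (2:ℤ)^n - 1 →
      (a (p+α)).1 ∈ valueSetM x (n+1) k ∧ (a (p+α)).2 ∈ valueSetM x (n+1) k := by
  induction n with
  | zero =>
    intro hns p hp1 hp2
    obtain ⟨m, hm, hσm⟩ := hx.1.surjOn (show p ∈ Set.Icc 1 s from ⟨hp1, by norm_num at hp2; linarith⟩)
    refine ⟨2*m, by linarith [hm.1], by linarith [hm.2], ?_⟩
    intro α hα0 hα1
    have hα : α = 0 := by norm_num at hα1; omega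
    subst hα
    obtain ⟨he1, he2⟩ := hx.2 m hm.1 hm.2
    rw [hσm] at he1 he2
    have heven : Even (2*m) := even_two_mul m
    simp only [valueSetM, if_pos heven, add_zero]
    constructor
    · left; rw [show 2*m - 1 = 2*m - 1 from rfl, he1]
    · right; rw [he2]; rfl
  | succ n ih =>
    intro hns p hp1 hp2
    have h1 : (1:ℤ) ≤ 2^n := one_le_pow₀ one_le_two
    have hpow : (2:ℤ)^(n+1) = 2*2^n := by ring
    rw [hpow] at hns hp2
    obtain ⟨k1, hk11, hk12, hk1⟩ := ih (by linarith) p hp1 (by linarith)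
    obtain ⟨k2, hk21, hk22, hk2⟩ := ih (by linarith) (p + 2^n) (by linarith) (by linarith)
    have hv : (a (p + 2^n - 1)).2 = (a (p + 2^n)).1 := by
      have := ha.2.1 (p + 2^n - 1) (by linarith) (by linarith)
      rwa [show p + 2^n - 1 + 1 = p + 2^n by ring] at this
    have hv1 : (a (p + 2^n - 1)).2 ∈ valueSetM x (n+1) k1 := by
      have := (hk1 (2^n - 1) (by linarith) le_rfl).2
      rwa [show p + (2^n - 1) = p + 2^n - 1 by ring] at this
    have hv2 : (a (p + 2^n - 1)).2 ∈ valueSetM x (n+1) k2 := by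
      have := (hk2 0 le_rfl (by linarith)).1
      rw [hv]; rwa [add_zero] at this
    have main : ∀ α : ℤ, 0 ≤ α → α ≤ 2*2^n - 1 →
        ((a (p+α)).1 ∈ valueSetM x (n+1) k1 ∪ valueSetM x (n+1) k2) ∧
        ((a (p+α)).2 ∈ valueSetM x (n+1) k1 ∪ valueSetM x (n+1) k2) := by
      intro α hα0 hα1
      rcases le_or_gt α (2^n - 1) with h | h
      · exact ⟨Or.inl (hk1 α hα0 h).1, Or.inl (hk1 α hα0 h).2⟩
      · have hβ := hk2 (α - 2^n) (by linarith) (by linarith)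
        rw [show p + 2^n + (α - 2^n) = p + α by ring] at hβ
        exact ⟨Or.inr hβ.1, Or.inr hβ.2⟩
    have hsub : ∃ k : ℤ, 1 ≤ k ∧ k ≤ 2*s ∧
        valueSetM x (n+1) k1 ∪ valueSetM x (n+1) k2 ⊆ valueSetM x (n+2) k := by
      rcases lt_trichotomy k1 k2 with h | h | h
      · refine ⟨k2, hk21, hk22, ?_⟩
        rw [valueSetM_succ_succ]
        rintro y (hy | hy)
        · right
          exact Set.mem_biUnion ⟨hk11, h, ⟨_, hv1, hv2⟩⟩ hy
        · exact Or.inl hy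
      · subst h
        refine ⟨k1, hk11, hk12, ?_⟩
        rw [valueSetM_succ_succ]
        rintro y (hy | hy) <;> exact Or.inl hy
      · refine ⟨k1, hk11, hk12, ?_⟩
        rw [valueSetM_succ_succ]
        rintro y (hy | hy)
        · exact Or.inl hy
        · right
          exact Set.mem_biUnion ⟨hk21, h, ⟨_, hv2, hv1⟩⟩ hy
    obtain ⟨k, hk1', hk2', hksub⟩ := hsub
    refine ⟨k, hk1', hk2', ?_⟩
    intro α hα0 hα1
    rw [hpow] at hα1
    exact ⟨hksub (main α hα0 hα1).1, hksub (main α hα0 hα1).2⟩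

/-- some layer-`l` node contains the values of `2^(l-1)` consecutive
reasoning pairs starting at pair `p`. -/
theorem node_contains_consecutive_pairs
    (s : ℤ) (hs : 1 ≤ s) (a : ℤ → ℤ × ℤ) (σ : ℤ → ℤ) (x : ℤ → ℤ)
    (ha : IsChainOn s a) (hx : IsSeqOn s a σ x)
    (l : ℕ) (hl : 1 ≤ l) (hls : (2 : ℤ) ^ (l - 1) ≤ s)
    (p : ℤ) (hp1 : 1 ≤ p) (hp2 : p ≤ s - 2 ^ (l - 1) + 1) :
    ∃ k : ℤ, 1 ≤ k ∧ k ≤ 2 * s ∧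
      ∀ α : ℤ, 0 ≤ α → α ≤ (2 : ℤ) ^ (l - 1) - 1 →
        (a (p + α)).1 ∈ valueSetM x l k ∧ (a (p + α)).2 ∈ valueSetM x l k := by
  obtain ⟨n, rfl⟩ : ∃ n, l = n + 1 := ⟨l - 1, (Nat.succ_pred_eq_of_pos hl).symm⟩
  simp only [Nat.add_sub_cancel] at hls hp2 ⊢
  exact key s a σ x ha hx n hls p hp1 hp2
end

section
/- For every s-step reasoning chain a, every permutation σ of {1,…,s}, every reasoning start x(2s+1) = (a m₀).1, and every layer l with 2 ≤ l, 2^(l−1) ≤ s, and m₀ + 2^(l−1) − 2 ≤ s, the value set at the final position contains the values of the 2^(l−1)−1 consecutive reasoning pairs starting at the start pair: for every 0 ≤ α ≤ 2^(l−1)−2, both (a (m₀+α)).1 and (a (m₀+α)).2 belong to V^l_(2s+1). -/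
lemma valueSetM_succ_subset (x : ℤ → ℤ) (l : ℕ) (i : ℤ) :
    valueSetM x (l + 1) i ⊆ valueSetM x (l + 2) i := by
  rw [valueSetM]
  exact Set.subset_union_left

lemma valueSetM_absorb (x : ℤ → ℤ) (l : ℕ) (i j : ℤ) (h1 : 1 ≤ j) (h2 : j < i)
    (h3 : (valueSetM x (l+1) j ∩ valueSetM x (l+1) i).Nonempty) :
    valueSetM x (l+1) j ⊆ valueSetM x (l+2) i := by
  intro y hy
  rw [valueSetM]
  exact Or.inr (Set.mem_iUnion₂.mpr ⟨j, ⟨h1, h2, h3⟩, hy⟩)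

lemma valueSetM_one_even (x : ℤ → ℤ) (m : ℤ) :
    valueSetM x 1 (2 * m) = {x (2 * m - 1), x (2 * m)} := by
  rw [valueSetM, if_pos (even_two_mul m)]

lemma valueSetM_one_odd (x : ℤ → ℤ) (i : ℤ) (h : ¬ Even i) :
    valueSetM x 1 i = {x i} := by
  rw [valueSetM, if_neg h]

lemma merge_lemma (s : ℤ) (a : ℤ → ℤ × ℤ) (σ : ℤ → ℤ) (x : ℤ → ℤ)
    (ha : IsChainOn s a) (hx : IsSeqOn s a σ x) :
    ∀ l : ℕ, ∀ u v : ℤ, 1 ≤ u → v ≤ s → v - u + 1 = 2 ^ l →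
    ∃ m, 1 ≤ m ∧ m ≤ s ∧ ∀ k, u ≤ k → k ≤ v →
      (a k).1 ∈ valueSetM x (l+1) (2*m) ∧ (a k).2 ∈ valueSetM x (l+1) (2*m) := by
  intro l
  induction l with
  | zero =>
    intro u v hu hv hsize
    have huv : u = v := by
      have h1 : v - u + 1 = 1 := by simpa using hsize
      omega
    obtain ⟨m, hm, hσ⟩ := hx.1.surjOn (show u ∈ Set.Icc 1 s from ⟨hu, huv ▸ hv⟩)
    refine ⟨m, hm.1, hm.2, ?_⟩
    intro k hk1 hk2
    have hk : k = u := le_antisymm (huv ▸ hk2) hk1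
    subst hk
    have hxm := hx.2 m hm.1 hm.2
    rw [valueSetM_one_even]
    constructor
    · exact Or.inl (by rw [hxm.1, hσ])
    · exact Or.inr (by rw [hxm.2, hσ]; exact rfl)
  | succ n ih =>
    intro u v hu hv hsize
    have hpow : (2:ℤ) ^ (n+1) = 2 * 2 ^ n := by ring
    set t : ℤ := 2 ^ n with ht
    have htpos : (0:ℤ) < t := by positivity
    have hsz : v - u + 1 = 2 * t := by rw [hsize, hpow]
    obtain ⟨m₁, hm₁1, hm₁s, H₁⟩ := ih u (u + t - 1) hu (by omega) (by omega)
    obtain ⟨m₂, hm₂1, hm₂s, H₂⟩ := ih (u + t) v (by omega) hv (by omega)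
    have hlink : (a (u + t - 1)).2 = (a (u + t)).1 := by
      have := ha.2.1 (u + t - 1) (by omega) (by omega)
      rw [this]; ring_nf
    rcases lt_trichotomy m₁ m₂ with hlt | heq | hgt
    · have habs : valueSetM x (n+1) (2*m₁) ⊆ valueSetM x (n+2) (2*m₂) :=
        valueSetM_absorb x n (2*m₂) (2*m₁) (by omega) (by omega)
          ⟨(a (u+t-1)).2, (H₁ (u+t-1) (by omega) (by omega)).2,
            hlink ▸ (H₂ (u+t) le_rfl (by omega)).1⟩
      refine ⟨m₂, hm₂1, hm₂s, ?_⟩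
      intro k hk1 hk2
      rcases le_or_gt k (u + t - 1) with h | h
      · exact ⟨habs (H₁ k hk1 h).1, habs (H₁ k hk1 h).2⟩
      · exact ⟨valueSetM_succ_subset x n (2*m₂) (H₂ k (by omega) hk2).1,
          valueSetM_succ_subset x n (2*m₂) (H₂ k (by omega) hk2).2⟩
    · subst heq
      refine ⟨m₁, hm₁1, hm₁s, ?_⟩
      intro k hk1 hk2
      rcases le_or_gt k (u + t - 1) with h | h
      · exact ⟨valueSetM_succ_subset x n (2*m₁) (H₁ k hk1 h).1,
          valueSetM_succ_subset x n (2*m₁) (H₁ k hk1 h).2⟩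
      · exact ⟨valueSetM_succ_subset x n (2*m₁) (H₂ k (by omega) hk2).1,
          valueSetM_succ_subset x n (2*m₁) (H₂ k (by omega) hk2).2⟩
    · have habs : valueSetM x (n+1) (2*m₂) ⊆ valueSetM x (n+2) (2*m₁) :=
        valueSetM_absorb x n (2*m₁) (2*m₂) (by omega) (by omega)
          ⟨(a (u+t-1)).2, hlink ▸ (H₂ (u+t) le_rfl (by omega)).1,
            (H₁ (u+t-1) (by omega) (by omega)).2⟩
      refine ⟨m₁, hm₁1, hm₁s, ?_⟩
      intro k hk1 hk2
      rcases le_or_gt k (u + t - 1) with h | h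
      · exact ⟨valueSetM_succ_subset x n (2*m₁) (H₁ k hk1 h).1,
          valueSetM_succ_subset x n (2*m₁) (H₁ k hk1 h).2⟩
      · exact ⟨habs (H₂ k (by omega) hk2).1, habs (H₂ k (by omega) hk2).2⟩

lemma main_aux (s : ℤ) (a : ℤ → ℤ × ℤ) (σ : ℤ → ℤ) (x : ℤ → ℤ) (m₀ : ℤ)
    (ha : IsChainOn s a) (hx : IsSeqOn s a σ x)
    (hm₀ : 1 ≤ m₀ ∧ m₀ ≤ s) (hstart : x (2 * s + 1) = (a m₀).1) :
    ∀ n : ℕ, m₀ + 2^(n+1) - 2 ≤ s → ∀ k, m₀ ≤ k → k ≤ m₀ + 2^(n+1) - 2 →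
      (a k).1 ∈ valueSetM x (n+2) (2*s+1) ∧ (a k).2 ∈ valueSetM x (n+2) (2*s+1) := by
  intro n
  induction n with
  | zero =>
    intro hb k hk1 hk2
    norm_num at hk2
    have hk : k = m₀ := le_antisymm hk2 hk1
    rw [hk]
    obtain ⟨m, hm1, hms, H⟩ :=
      merge_lemma s a σ x ha hx 0 m₀ m₀ hm₀.1 hm₀.2 (by norm_num)
    have hodd : ¬ Even (2*s+1) := by rw [Int.even_iff]; omega
    have hmem : (a m₀).1 ∈ valueSetM x 1 (2*s+1) := by
      rw [valueSetM_one_odd x _ hodd]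
      exact Set.mem_singleton_iff.mpr hstart.symm
    have habs : valueSetM x 1 (2*m) ⊆ valueSetM x 2 (2*s+1) :=
      valueSetM_absorb x 0 (2*s+1) (2*m) (by omega) (by omega)
        ⟨(a m₀).1, (H m₀ le_rfl le_rfl).1, hmem⟩
    exact ⟨habs (H m₀ le_rfl le_rfl).1, habs (H m₀ le_rfl le_rfl).2⟩
  | succ n ih =>
    intro hb k hk1 hk2
    have hpow : (2:ℤ) ^ (n+1+1) = 2 * 2 ^ (n+1) := by ring
    set t : ℤ := 2 ^ (n+1) with ht
    have htge : (2:ℤ) ≤ t := by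
      calc (2:ℤ) = 2^1 := by norm_num
      _ ≤ 2^(n+1) := by apply pow_le_pow_right₀ <;> omega
    rw [hpow] at hb hk2
    have ih' := ih (by omega)
    obtain ⟨m₁, hm₁1, hm₁s, H₁⟩ :=
      merge_lemma s a σ x ha hx (n+1) m₀ (m₀ + t - 1) hm₀.1 (by omega) (by omega)
    obtain ⟨m₂, hm₂1, hm₂s, H₂⟩ :=
      merge_lemma s a σ x ha hx (n+1) (m₀ + t - 1) (m₀ + 2*t - 2) (by omega) (by omega)
        (by omega)
    have hA₁ : valueSetM x (n+2) (2*m₁) ⊆ valueSetM x (n+3) (2*s+1) :=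
      valueSetM_absorb x (n+1) (2*s+1) (2*m₁) (by omega) (by omega)
        ⟨(a m₀).1, (H₁ m₀ le_rfl (by omega)).1, (ih' m₀ le_rfl (by omega)).1⟩
    have hlink : (a (m₀ + t - 2)).2 = (a (m₀ + t - 1)).1 := by
      have := ha.2.1 (m₀ + t - 2) (by omega) (by omega)
      rw [this]; ring_nf
    have hA₂ : valueSetM x (n+2) (2*m₂) ⊆ valueSetM x (n+3) (2*s+1) :=
      valueSetM_absorb x (n+1) (2*s+1) (2*m₂) (by omega) (by omega)
        ⟨(a (m₀ + t - 2)).2, hlink ▸ (H₂ (m₀ + t - 1) le_rfl (by omega)).1,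
          (ih' (m₀ + t - 2) (by omega) (by omega)).2⟩
    rcases le_or_gt k (m₀ + t - 1) with h | h
    · exact ⟨hA₁ (H₁ k hk1 h).1, hA₁ (H₁ k hk1 h).2⟩
    · exact ⟨hA₂ (H₂ k (by omega) hk2).1, hA₂ (H₂ k (by omega) hk2).2⟩

/-- after `l ≥ 2` layers the reasoning-start position contains the
values of the `2^(l-1) - 1` consecutive reasoning pairs starting at the start pair. -/
theorem start_contains_consecutive_pairs
    (s : ℤ) (hs : 1 ≤ s) (a : ℤ → ℤ × ℤ) (σ : ℤ → ℤ) (x : ℤ → ℤ) (m₀ : ℤ)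
    (ha : IsChainOn s a) (hx : IsSeqOn s a σ x)
    (hm₀ : 1 ≤ m₀ ∧ m₀ ≤ s) (hstart : x (2 * s + 1) = (a m₀).1)
    (l : ℕ) (hl : 2 ≤ l) (hls : (2 : ℤ) ^ (l - 1) ≤ s)
    (hm : m₀ + (2 : ℤ) ^ (l - 1) - 2 ≤ s) :
    ∀ α : ℤ, 0 ≤ α → α ≤ (2 : ℤ) ^ (l - 1) - 2 →
      (a (m₀ + α)).1 ∈ valueSetM x l (2 * s + 1) ∧
      (a (m₀ + α)).2 ∈ valueSetM x l (2 * s + 1) := by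
  obtain ⟨n, rfl⟩ : ∃ n, l = n + 2 := ⟨l - 2, by omega⟩
  intro α hα1 hα2
  have h1 : (n + 2 - 1) = n + 1 := rfl
  rw [h1] at hm hα2
  set t : ℤ := 2 ^ (n+1) with ht
  exact main_aux s a σ x m₀ ha hx hm₀ hstart n hm (m₀ + α) (by omega) (by omega)
end

section
/- Let n ≥ 1, α, β ∈ ℝ, ε > 0, and let L_N be the LayerNorm map L_N(x)_i = α·(x_i − E(x))/√(Var(x)+ε) + β. For all M ≥ 0, ε₀ ≥ 0 and all x, y ∈ ℝ^n with ‖x‖_∞ ≤ M, ‖y‖_∞ ≤ M, and ‖x − y‖_∞ ≤ ε₀, one has ‖L_N(x) − L_N(y)‖_∞ ≤ (|α|·ε₀/ε)·(2·√(M² + ε) + 4·M²/√ε). In particular L_N is uniformly continuous on every bounded subset of ℝ^n. -/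
/-- Coordinate mean `E(x)` of a vector in `ℝ^n`. -/
noncomputable def lnMean (n : ℕ) (x : Fin n → ℝ) : ℝ := (∑ i, x i) / n

/-- Coordinate variance `Var(x)` of a vector in `ℝ^n`. -/
noncomputable def lnVar (n : ℕ) (x : Fin n → ℝ) : ℝ :=
  (∑ i, (x i) ^ 2) / n - (lnMean n x) ^ 2

/-- LayerNorm with parameters `α`, `β` and stabilizer `ε`. -/
noncomputable def layerNorm (n : ℕ) (α β ε : ℝ) (x : Fin n → ℝ) : Fin n → ℝ :=
  fun i => α * (x i - lnMean n x) / Real.sqrt (lnVar n x + ε) + β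

lemma lnMean_abs_le {n : ℕ} (hn : 1 ≤ n) (x : Fin n → ℝ) : |lnMean n x| ≤ ‖x‖ := by
  have hn' : (0:ℝ) < n := by exact_mod_cast hn
  unfold lnMean
  rw [abs_div, abs_of_nonneg hn'.le, div_le_iff₀ hn']
  calc |∑ i, x i| ≤ ∑ i, |x i| := Finset.abs_sum_le_sum_abs _ _
    _ ≤ ∑ _i : Fin n, ‖x‖ := Finset.sum_le_sum fun i _ => by
        simpa using norm_le_pi_norm x i
    _ = ‖x‖ * n := by simp [Finset.sum_const, mul_comm]

lemma lnMean_sub {n : ℕ} (x y : Fin n → ℝ) :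
    lnMean n (x - y) = lnMean n x - lnMean n y := by
  unfold lnMean
  rw [← sub_div, ← Finset.sum_sub_distrib]
  simp

lemma lnVar_nonneg {n : ℕ} (hn : 1 ≤ n) (x : Fin n → ℝ) : 0 ≤ lnVar n x := by
  have hn' : (0:ℝ) < n := by exact_mod_cast hn
  have h := sq_sum_le_card_mul_sum_sq (s := Finset.univ) (f := x)
  simp only [Finset.card_univ, Fintype.card_fin] at h
  unfold lnVar lnMean
  rw [div_pow, sub_nonneg, div_le_div_iff₀ (by positivity) hn']
  push_cast at h ⊢
  nlinarith

lemma lnVar_diff {n : ℕ} (hn : 1 ≤ n) (M ε₀ : ℝ) (x y : Fin n → ℝ)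
    (hx : ‖x‖ ≤ M) (hy : ‖y‖ ≤ M) (hxy : ‖x - y‖ ≤ ε₀) :
    |lnVar n x - lnVar n y| ≤ 4 * M * ε₀ := by
  have hn' : (0:ℝ) < n := by exact_mod_cast hn
  have hxi : ∀ i, |x i| ≤ M := fun i => le_trans (by simpa using norm_le_pi_norm x i) hx
  have hyi : ∀ i, |y i| ≤ M := fun i => le_trans (by simpa using norm_le_pi_norm y i) hy
  have hdi : ∀ i, |x i - y i| ≤ ε₀ := fun i =>
    le_trans (by simpa using norm_le_pi_norm (x - y) i) hxy
  have hEx : |lnMean n x| ≤ M := le_trans (lnMean_abs_le hn x) hx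
  have hEy : |lnMean n y| ≤ M := le_trans (lnMean_abs_le hn y) hy
  have hEd : |lnMean n x - lnMean n y| ≤ ε₀ := by
    rw [← lnMean_sub]; exact le_trans (lnMean_abs_le hn _) hxy
  have hsum : |∑ i, ((x i) ^ 2 - (y i) ^ 2)| ≤ n * (2 * M * ε₀) := by
    calc |∑ i, ((x i) ^ 2 - (y i) ^ 2)| ≤ ∑ i, |(x i) ^ 2 - (y i) ^ 2| :=
          Finset.abs_sum_le_sum_abs _ _
      _ ≤ ∑ _i : Fin n, 2 * M * ε₀ := Finset.sum_le_sum fun i _ => by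
          have : (x i) ^ 2 - (y i) ^ 2 = (x i - y i) * (x i + y i) := by ring
          rw [this, abs_mul]
          have h1 := hdi i
          have h2 : |x i + y i| ≤ 2 * M := by
            calc |x i + y i| ≤ |x i| + |y i| := abs_add_le _ _
              _ ≤ 2 * M := by linarith [hxi i, hyi i]
          have h1' : (0:ℝ) ≤ |x i - y i| := abs_nonneg _
          nlinarith [abs_nonneg (x i + y i)]
      _ = n * (2 * M * ε₀) := by simp [Finset.sum_const, mul_comm]
  have hmean : |lnMean n x ^ 2 - lnMean n y ^ 2| ≤ 2 * M * ε₀ := by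
    have : lnMean n x ^ 2 - lnMean n y ^ 2 =
        (lnMean n x - lnMean n y) * (lnMean n x + lnMean n y) := by ring
    rw [this, abs_mul]
    have h2 : |lnMean n x + lnMean n y| ≤ 2 * M := by
      calc |lnMean n x + lnMean n y| ≤ |lnMean n x| + |lnMean n y| := abs_add_le _ _
        _ ≤ 2 * M := by linarith
    nlinarith [abs_nonneg (lnMean n x - lnMean n y), abs_nonneg (lnMean n x + lnMean n y)]
  have key : lnVar n x - lnVar n y =
      (∑ i, ((x i) ^ 2 - (y i) ^ 2)) / n - (lnMean n x ^ 2 - lnMean n y ^ 2) := by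
    unfold lnVar
    rw [Finset.sum_sub_distrib, sub_div]
    ring
  rw [key]
  calc |(∑ i, ((x i) ^ 2 - (y i) ^ 2)) / n - (lnMean n x ^ 2 - lnMean n y ^ 2)|
      ≤ |(∑ i, ((x i) ^ 2 - (y i) ^ 2)) / n| + |lnMean n x ^ 2 - lnMean n y ^ 2| :=
        abs_sub _ _
    _ ≤ 2 * M * ε₀ + 2 * M * ε₀ := by
        have : |(∑ i, ((x i) ^ 2 - (y i) ^ 2)) / n| ≤ 2 * M * ε₀ := by
          rw [abs_div, abs_of_nonneg hn'.le, div_le_iff₀ hn']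
          linarith [hsum]
        linarith
    _ = 4 * M * ε₀ := by ring

set_option maxHeartbeats 1000000 in
lemma coord_bound {n : ℕ} (hn : 1 ≤ n) (α β ε : ℝ) (hε : 0 < ε)
    (M ε₀ : ℝ) (hM : 0 ≤ M) (hε₀ : 0 ≤ ε₀) (x y : Fin n → ℝ)
    (hx : ‖x‖ ≤ M) (hy : ‖y‖ ≤ M) (hxy : ‖x - y‖ ≤ ε₀) (i : Fin n) :
    |layerNorm n α β ε x i - layerNorm n α β ε y i| ≤
      (|α| * ε₀ / ε) * (2 * Real.sqrt (M ^ 2 + ε) + 4 * M ^ 2 / Real.sqrt ε) := by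
  have hVx := lnVar_nonneg hn x
  have hVy := lnVar_nonneg hn y
  set Ex := lnMean n x with hExdef
  set Ey := lnMean n y with hEydef
  set sx := Real.sqrt (lnVar n x + ε) with hsxdef
  set sy := Real.sqrt (lnVar n y + ε) with hsydef
  have hsε : 0 < Real.sqrt ε := Real.sqrt_pos.2 hε
  have hsxε : Real.sqrt ε ≤ sx := Real.sqrt_le_sqrt (by linarith)
  have hsyε : Real.sqrt ε ≤ sy := Real.sqrt_le_sqrt (by linarith)
  have hsx : 0 < sx := lt_of_lt_of_le hsε hsxε
  have hsy : 0 < sy := lt_of_lt_of_le hsε hsyε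
  have hsx2 : sx ^ 2 = lnVar n x + ε := Real.sq_sqrt (by linarith)
  have hsy2 : sy ^ 2 = lnVar n y + ε := Real.sq_sqrt (by linarith)
  have hε2 : Real.sqrt ε ^ 2 = ε := Real.sq_sqrt hε.le
  have hxi : |x i| ≤ M := le_trans (by simpa using norm_le_pi_norm x i) hx
  have hyi : |y i| ≤ M := le_trans (by simpa using norm_le_pi_norm y i) hy
  have hdi : |x i - y i| ≤ ε₀ := le_trans (by simpa using norm_le_pi_norm (x - y) i) hxy
  have hEx : |Ex| ≤ M := le_trans (lnMean_abs_le hn x) hx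
  have hEy : |Ey| ≤ M := le_trans (lnMean_abs_le hn y) hy
  have hEd : |Ex - Ey| ≤ ε₀ := by
    rw [hExdef, hEydef, ← lnMean_sub]; exact le_trans (lnMean_abs_le hn _) hxy
  have hVd : |lnVar n x - lnVar n y| ≤ 4 * M * ε₀ := lnVar_diff hn M ε₀ x y hx hy hxy
  have hsd : |sy - sx| ≤ 2 * M * ε₀ / Real.sqrt ε := by
    have h1 : |sy - sx| * (sy + sx) = |lnVar n y - lnVar n x| := by
      rw [← abs_of_nonneg (by linarith : (0:ℝ) ≤ sy + sx), ← abs_mul]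
      congr 1
      linear_combination hsy2 - hsx2
    have h2 : |lnVar n y - lnVar n x| ≤ 4 * M * ε₀ := by rw [abs_sub_comm]; exact hVd
    rw [le_div_iff₀ hsε]
    nlinarith [mul_nonneg (abs_nonneg (sy - sx)) (by linarith : (0:ℝ) ≤ sy + sx - 2 * Real.sqrt ε)]
  have hdecomp : layerNorm n α β ε x i - layerNorm n α β ε y i =
      α * ((x i - Ex) - (y i - Ey)) / sx + α * (y i - Ey) * (sy - sx) / (sx * sy) := by
    show α * (x i - Ex) / sx + β - (α * (y i - Ey) / sy + β) = _
    field_simp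
    ring
  rw [hdecomp]
  have hb1 : |α * ((x i - Ex) - (y i - Ey)) / sx| ≤ |α| * (2 * ε₀) / Real.sqrt ε := by
    rw [abs_div, abs_mul, abs_of_pos hsx]
    have hA : |(x i - Ex) - (y i - Ey)| ≤ 2 * ε₀ := by
      have h : (x i - Ex) - (y i - Ey) = (x i - y i) - (Ex - Ey) := by ring
      rw [h]
      calc |(x i - y i) - (Ex - Ey)| ≤ |x i - y i| + |Ex - Ey| := abs_sub _ _
        _ ≤ 2 * ε₀ := by linarith
    exact div_le_div₀ (by positivity) (mul_le_mul_of_nonneg_left hA (abs_nonneg α)) hsε hsxε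
  have hb2 : |α * (y i - Ey) * (sy - sx) / (sx * sy)| ≤
      |α| * (2 * M * (2 * M * ε₀ / Real.sqrt ε)) / ε := by
    rw [abs_div, abs_mul, abs_mul, abs_of_pos (mul_pos hsx hsy)]
    have hB : |y i - Ey| ≤ 2 * M := by
      calc |y i - Ey| ≤ |y i| + |Ey| := abs_sub _ _
        _ ≤ 2 * M := by linarith
    have hnum : |α| * |y i - Ey| * |sy - sx| ≤ |α| * (2 * M * (2 * M * ε₀ / Real.sqrt ε)) := by
      have h1 : |y i - Ey| * |sy - sx| ≤ 2 * M * (2 * M * ε₀ / Real.sqrt ε) := by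
        apply mul_le_mul hB hsd (abs_nonneg _) (by linarith)
      calc |α| * |y i - Ey| * |sy - sx| = |α| * (|y i - Ey| * |sy - sx|) := by ring
        _ ≤ _ := mul_le_mul_of_nonneg_left h1 (abs_nonneg α)
    have hden : ε ≤ sx * sy := by nlinarith
    exact div_le_div₀ (by positivity) hnum hε hden
  calc |α * ((x i - Ex) - (y i - Ey)) / sx + α * (y i - Ey) * (sy - sx) / (sx * sy)|
      ≤ |α * ((x i - Ex) - (y i - Ey)) / sx| + |α * (y i - Ey) * (sy - sx) / (sx * sy)| :=
        abs_add_le _ _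
    _ ≤ |α| * (2 * ε₀) / Real.sqrt ε + |α| * (2 * M * (2 * M * ε₀ / Real.sqrt ε)) / ε := by
        linarith
    _ ≤ (|α| * ε₀ / ε) * (2 * Real.sqrt (M ^ 2 + ε)) + (|α| * ε₀ / ε) * (4 * M ^ 2 / Real.sqrt ε) := by
        have e2 : |α| * (2 * M * (2 * M * ε₀ / Real.sqrt ε)) / ε =
            (|α| * ε₀ / ε) * (4 * M ^ 2 / Real.sqrt ε) := by
          field_simp
          ring
        rw [e2]
        have e1 : |α| * (2 * ε₀) / Real.sqrt ε = (|α| * ε₀ / ε) * (2 * Real.sqrt ε) := by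
          field_simp
          linear_combination (-|α| * ε₀) * hε2
        rw [e1]
        have hsq : Real.sqrt ε ≤ Real.sqrt (M ^ 2 + ε) := Real.sqrt_le_sqrt (by nlinarith)
        have hnn : (0:ℝ) ≤ |α| * ε₀ / ε := by positivity
        have := mul_le_mul_of_nonneg_left (by linarith : 2 * Real.sqrt ε ≤ 2 * Real.sqrt (M ^ 2 + ε)) hnn
        linarith
    _ = (|α| * ε₀ / ε) * (2 * Real.sqrt (M ^ 2 + ε) + 4 * M ^ 2 / Real.sqrt ε) := by ring

/-- quantitative continuity of LayerNorm in the sup norm, with the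
explicit modulus `(|α|·ε₀/ε)·(2·√(M² + ε) + 4·M²/√ε)` on the ball of radius `M`;
in particular LayerNorm is uniformly continuous on every bounded set. -/
theorem layerNorm_uniform_continuity
    (n : ℕ) (hn : 1 ≤ n) (α β ε : ℝ) (hε : 0 < ε) :
    (∀ M ε₀ : ℝ, 0 ≤ M → 0 ≤ ε₀ → ∀ x y : Fin n → ℝ,
      ‖x‖ ≤ M → ‖y‖ ≤ M → ‖x - y‖ ≤ ε₀ →
      ‖layerNorm n α β ε x - layerNorm n α β ε y‖ ≤
        (|α| * ε₀ / ε) * (2 * Real.sqrt (M ^ 2 + ε) + 4 * M ^ 2 / Real.sqrt ε)) ∧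
    ∀ S : Set (Fin n → ℝ), Bornology.IsBounded S →
      UniformContinuousOn (layerNorm n α β ε) S := by
  have main : ∀ M ε₀ : ℝ, 0 ≤ M → 0 ≤ ε₀ → ∀ x y : Fin n → ℝ,
      ‖x‖ ≤ M → ‖y‖ ≤ M → ‖x - y‖ ≤ ε₀ →
      ‖layerNorm n α β ε x - layerNorm n α β ε y‖ ≤
        (|α| * ε₀ / ε) * (2 * Real.sqrt (M ^ 2 + ε) + 4 * M ^ 2 / Real.sqrt ε) := by
    intro M ε₀ hM hε₀ x y hx hy hxy
    have hsε : 0 < Real.sqrt ε := Real.sqrt_pos.2 hε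
    have hC : (0:ℝ) ≤ (|α| * ε₀ / ε) * (2 * Real.sqrt (M ^ 2 + ε) + 4 * M ^ 2 / Real.sqrt ε) := by
      positivity
    rw [pi_norm_le_iff_of_nonneg hC]
    intro i
    simpa using coord_bound hn α β ε hε M ε₀ hM hε₀ x y hx hy hxy i
  refine ⟨main, fun S hS => ?_⟩
  obtain ⟨M, hM⟩ := hS.exists_norm_le
  set M' := max M 0 with hM'def
  have hM' : 0 ≤ M' := le_max_right _ _
  have hMS : ∀ x ∈ S, ‖x‖ ≤ M' := fun x hx => le_trans (hM x hx) (le_max_left _ _)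
  rw [Metric.uniformContinuousOn_iff_le]
  intro d hd
  set K := (|α| / ε) * (2 * Real.sqrt (M' ^ 2 + ε) + 4 * M' ^ 2 / Real.sqrt ε) with hKdef
  have hsε : 0 < Real.sqrt ε := Real.sqrt_pos.2 hε
  have hK : 0 ≤ K := by positivity
  refine ⟨d / (K + 1), by positivity, fun x hx y hy hxy => ?_⟩
  rw [dist_eq_norm] at *
  have h := main M' (d / (K + 1)) hM' (by positivity) x y (hMS x hx) (hMS y hy) hxy
  calc ‖layerNorm n α β ε x - layerNorm n α β ε y‖
      ≤ (|α| * (d / (K + 1)) / ε) * (2 * Real.sqrt (M' ^ 2 + ε) + 4 * M' ^ 2 / Real.sqrt ε) := h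
    _ = K * (d / (K + 1)) := by rw [hKdef]; ring
    _ ≤ d := by
        rw [mul_div_assoc'] 
        rw [div_le_iff₀ (by linarith : (0:ℝ) < K + 1)]
        nlinarith
end
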